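/- arXiv:2602.12934 — 3 statements merged into one kernel-verified Lean document; each statement's English description precedes it below -/
import Mathlib

section
/- Let κ be an infinite cardinal, φ a positive modulus, p ∈ [1,∞), and let X be a (<κ)-φ-octahedral normed space. Then for every normed space Y the direct sum X ⊕_p Y is (<κ)-(φ_p ∘ φ)-octahedral. -/
open Set Metric ENNReal

universe u

/-- A set `P` in a normed space is `r`-separated if `‖x - y‖ ≥ r`
for all distinct `x, y ∈ P`. -/
def IsRSeparated {X : Type u} [NormedAddCommGroup X] (r : ℝ) (P : Set X) : Prop :=
  ∀ x ∈ P, ∀ y ∈ P, x ≠ y → r ≤ ‖x - y‖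

/-- A set `P` in a normed space is `r`-dense if every point of the space is within
distance `r` of some point of `P`. -/
def IsRDense {X : Type u} [NormedAddCommGroup X] (r : ℝ) (P : Set X) : Prop :=
  ∀ x : X, ∃ p ∈ P, ‖x - p‖ ≤ r

/-- The simultaneous packing and covering constant `γ(X)`: the infimum of all `r > 0`
for which `X` contains a set that is simultaneously `2`-separated and `r`-dense. -/
noncomputable def packingCovering (X : Type u) [NormedAddCommGroup X] : ℝ :=
  sInf {r : ℝ | 0 < r ∧ ∃ P : Set X, IsRSeparated 2 P ∧ IsRDense r P}

/-- The lattice simultaneous packing and covering constant `γ*(X)`: the infimum of all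
`r > 0` for which `X` contains an additive subgroup that is simultaneously `2`-separated
and `r`-dense. -/
noncomputable def packingCoveringStar (X : Type u) [NormedAddCommGroup X] : ℝ :=
  sInf {r : ℝ | 0 < r ∧ ∃ D : AddSubgroup X,
    IsRSeparated 2 (D : Set X) ∧ IsRDense r (D : Set X)}

/-- The Kottman constant `K(X)`: the supremum of all `r > 0` such that the closed unit
ball of `X` contains an infinite `r`-separated set. -/
noncomputable def kottman (X : Type u) [NormedAddCommGroup X] : ℝ :=
  sSup {r : ℝ | 0 < r ∧ ∃ P : Set X,
    P ⊆ closedBall (0 : X) 1 ∧ P.Infinite ∧ IsRSeparated r P}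

/-- The `κ`-Kottman constant `K(X; κ)`: the supremum of all `r > 0` such that the closed
unit ball of `X` contains an `r`-separated set of cardinality `κ`. -/
noncomputable def kottmanCard (X : Type u) [NormedAddCommGroup X] (κ : Cardinal.{u}) : ℝ :=
  sSup {r : ℝ | 0 < r ∧ ∃ P : Set X,
    P ⊆ closedBall (0 : X) 1 ∧ Cardinal.mk ↥P = κ ∧ IsRSeparated r P}

/-- The density character of a topological space: the smallest cardinality of a dense
subset. -/
noncomputable def densChar (X : Type u) [TopologicalSpace X] : Cardinal.{u} :=
  sInf {c : Cardinal.{u} | ∃ s : Set X, Dense s ∧ Cardinal.mk ↥s = c}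

/-- The modulus of local uniform rotundity `δ_X(x₀, ε)` at a point `x₀`. -/
noncomputable def lurModulus {X : Type u} [NormedAddCommGroup X] (x₀ : X) (ε : ℝ) : ℝ :=
  sInf {d : ℝ | ∃ y : X, ‖y‖ ≤ 1 ∧ ε ≤ ‖x₀ - y‖ ∧ d = 1 - ‖x₀ + y‖ / 2}

/-- `x₀` is a LUR (locally uniformly rotund) point of the unit ball of `X` if it lies on
the unit sphere and `δ_X(x₀, ε) > 0` for every `ε ∈ (0, 2]`. -/
def IsLURPoint {X : Type u} [NormedAddCommGroup X] (x₀ : X) : Prop :=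
  ‖x₀‖ = 1 ∧ ∀ ε : ℝ, 0 < ε → ε ≤ 2 → 0 < lurModulus x₀ ε

/-- The modulus of convexity `δ_X(ε)` of a normed space `X`. -/
noncomputable def convexityModulus (X : Type u) [NormedAddCommGroup X] (ε : ℝ) : ℝ :=
  sInf {d : ℝ | ∃ x y : X, ‖x‖ ≤ 1 ∧ ‖y‖ ≤ 1 ∧ ε ≤ ‖x - y‖ ∧ d = 1 - ‖x + y‖ / 2}

/-- The tangential modulus of convexity `φ_X(t)`, defined through Birkhoff-James
orthogonality: `φ_X(t) = inf {‖x + t v‖ - 1 : x, v ∈ S_X, x ⊥_BJ v}`. -/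
noncomputable def tangentialModulus (X : Type u) [NormedAddCommGroup X]
    [NormedSpace ℝ X] (t : ℝ) : ℝ :=
  sInf {d : ℝ | ∃ x v : X, ‖x‖ = 1 ∧ ‖v‖ = 1 ∧
    (∀ lam : ℝ, ‖x‖ ≤ ‖x + lam • v‖) ∧ d = ‖x + t • v‖ - 1}

/-- `φ : [0,∞) → [0,∞)` is a positive modulus: `φ(0) = 0`, `φ` is continuous at `0`,
`t ↦ φ(t)/t` is non-decreasing on `(0,∞)`, and `φ(t) > 0` for `t > 0`. -/
def IsPositiveModulus (φ : ℝ → ℝ) : Prop :=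
  φ 0 = 0 ∧ Filter.Tendsto φ (nhdsWithin 0 (Set.Ici 0)) (nhds 0) ∧
    (∀ s t : ℝ, 0 < s → s ≤ t → φ s / s ≤ φ t / t) ∧ ∀ t : ℝ, 0 < t → 0 < φ t

/-- The positive modulus `φ_p(t) = (1 + t^p)^(1/p) - 1` (real exponents). -/
noncomputable def phiP (p : ℝ) (t : ℝ) : ℝ := (1 + t ^ p) ^ (1 / p) - 1

/-- A normed space `X` is `(<κ)-octahedral` if for every `ε > 0` and every closed
subspace `Z` of `X` of density character `< κ` there is a unit vector `x` with
`‖z + λ x‖ ≥ (1 - ε)(‖z‖ + |λ|)` for all `z ∈ Z`, `λ ∈ ℝ`. -/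
def KappaOctahedral (κ : Cardinal.{u}) (X : Type u) [NormedAddCommGroup X]
    [NormedSpace ℝ X] : Prop :=
  ∀ ε : ℝ, 0 < ε → ∀ Z : Submodule ℝ X, IsClosed (Z : Set X) → densChar ↥Z < κ →
    ∃ x : X, ‖x‖ = 1 ∧ ∀ z ∈ Z, ∀ lam : ℝ, (1 - ε) * (‖z‖ + |lam|) ≤ ‖z + lam • x‖

/-- A normed space `X` is `(<κ)-φ-octahedral` if for every `ε > 0` and every closed
subspace `Z` of `X` of density character `< κ` there is a unit vector `x` with
`‖z + λ x‖ ≥ (1 - ε)(1 + φ(|λ|))` for all `z` in the unit sphere of `Z` and `λ ∈ ℝ`. -/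
def PhiOctahedral (κ : Cardinal.{u}) (φ : ℝ → ℝ) (X : Type u) [NormedAddCommGroup X]
    [NormedSpace ℝ X] : Prop :=
  ∀ ε : ℝ, 0 < ε → ∀ Z : Submodule ℝ X, IsClosed (Z : Set X) → densChar ↥Z < κ →
    ∃ x : X, ‖x‖ = 1 ∧ ∀ z ∈ Z, ‖z‖ = 1 →
      ∀ lam : ℝ, (1 - ε) * (1 + φ |lam|) ≤ ‖z + lam • x‖

/-!
Take `x = (x₀, 0)`, where `x₀` is the `φ`-octahedral direction of `X` for the closure of the
first-coordinate projection of `Z`; this subspace has density character at most that of `Z`.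
For a unit vector `z = (u, v)` of `Z`, homogeneity of the octahedral estimate together with the
monotonicity of `φ(t)/t` gives `‖u + λ x₀‖ ≥ (1 - ε)(‖u‖ + φ(|λ|))` (for `u = 0` one uses
`φ(t) ≤ t`, which octahedrality forces). Superadditivity of `t ↦ t^p` then yields
`‖z + λ x‖^p ≥ (1 - ε)^p (‖u‖^p + φ(|λ|)^p + ‖v‖^p) = (1 - ε)^p (1 + φ(|λ|)^p)`.
-/

lemma densChar_le_of_denseRange {A B : Type u} [TopologicalSpace A] [TopologicalSpace B]
    {f : A → B} (hf : Continuous f) (hd : DenseRange f) : densChar B ≤ densChar A := by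
  obtain ⟨D, hD, hmk⟩ := csInf_mem (⟨_, univ, dense_univ, rfl⟩ :
    {c : Cardinal.{u} | ∃ s : Set A, Dense s ∧ Cardinal.mk ↥s = c}.Nonempty)
  calc densChar B ≤ Cardinal.mk ↥(f '' D) := csInf_le' ⟨f '' D, hd.dense_image hf hD, rfl⟩
    _ ≤ Cardinal.mk ↥D := Cardinal.mk_image_le
    _ = densChar A := hmk

lemma densChar_le_aleph0 (A : Type u) [TopologicalSpace A] [TopologicalSpace.SeparableSpace A] :
    densChar A ≤ Cardinal.aleph0 := by
  obtain ⟨s, hsc, hsd⟩ := TopologicalSpace.exists_countable_dense A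
  exact le_trans (csInf_le' ⟨s, hsd, rfl⟩) (Cardinal.mk_le_aleph0_iff.mpr hsc.to_subtype)

lemma aleph0_le_densChar (A : Type u) [TopologicalSpace A] [T1Space A] [Infinite A] :
    Cardinal.aleph0 ≤ densChar A := by
  refine le_csInf ⟨_, univ, dense_univ, rfl⟩ ?_
  rintro c ⟨s, hs, rfl⟩
  refine Cardinal.aleph0_le_mk_iff.mpr (Set.infinite_coe_iff.mpr fun hfin => ?_)
  exact infinite_univ (hfin.isClosed.closure_eq.symm.trans hs.closure_eq ▸ hfin)

lemma densChar_topologicalClosure_map_le {E F : Type u} [NormedAddCommGroup E] [NormedSpace ℝ E]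
    [NormedAddCommGroup F] [NormedSpace ℝ F] (T : E →L[ℝ] F) (Z : Submodule ℝ E) :
    densChar (Z.map (T : E →ₗ[ℝ] F)).topologicalClosure ≤ densChar Z := by
  let W := (Z.map (T : E →ₗ[ℝ] F)).topologicalClosure
  let f : Z → W := fun z =>
    ⟨T z, Submodule.le_topologicalClosure _ (Submodule.mem_map_of_mem z.2)⟩
  refine densChar_le_of_denseRange (f := f) (by fun_prop) fun w => ?_
  have hw : (w : F) ∈ closure (T '' Z) := by
    have := w.2
    rwa [← SetLike.mem_coe, Submodule.topologicalClosure_coe, Submodule.map_coe] at this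
  rw [closure_subtype, ← Set.range_comp]
  rwa [Set.image_eq_range] at hw

lemma le_of_forall_pos_one_sub_mul_le {a b : ℝ} (h : ∀ ε > 0, (1 - ε) * a ≤ b) : a ≤ b := by
  have hlim : Filter.Tendsto (fun ε : ℝ => (1 - ε) * a) (nhdsWithin 0 (Ioi 0)) (nhds a) := by
    have hcont : Continuous fun ε : ℝ => (1 - ε) * a := by fun_prop
    simpa using (hcont.tendsto 0).mono_left nhdsWithin_le_nhds
  exact le_of_tendsto hlim (eventually_nhdsWithin_of_forall h)

lemma IsPositiveModulus.nonneg {φ : ℝ → ℝ} (hφ : IsPositiveModulus φ) {t : ℝ} (ht : 0 ≤ t) :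
    0 ≤ φ t := by
  rcases ht.eq_or_lt with rfl | ht
  · exact hφ.1.ge
  · exact (hφ.2.2.2 t ht).le

lemma IsPositiveModulus.le_mul_apply_div {φ : ℝ → ℝ} (hφ : IsPositiveModulus φ) {a t : ℝ}
    (ha : 0 < a) (ha1 : a ≤ 1) (ht : 0 ≤ t) : φ t ≤ a * φ (t / a) := by
  rcases ht.eq_or_lt with rfl | ht
  · simp [hφ.1]
  have hratio := hφ.2.2.1 t (t / a) ht (le_div_self ht.le ha ha1)
  rwa [div_div_eq_mul_div, mul_comm, div_le_div_iff_of_pos_right ht] at hratio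

lemma PhiOctahedral.apply_le_self {κ : Cardinal.{u}} {φ : ℝ → ℝ} {X : Type u}
    [NormedAddCommGroup X] [NormedSpace ℝ X] (hX : PhiOctahedral κ φ X)
    (hκ : Cardinal.aleph0 < κ) {t : ℝ} (ht : 0 ≤ t) : φ t ≤ t := by
  have hsep (Z : Submodule ℝ X) [TopologicalSpace.SeparableSpace Z] : densChar Z < κ :=
    (densChar_le_aleph0 Z).trans_lt hκ
  obtain ⟨x₁, hx₁, -⟩ := hX 1 one_pos ⊥ (Submodule.closed_of_finiteDimensional _) (hsep ⊥)
  have hline : ∀ ε > 0, (1 - ε) * (1 + φ t) ≤ 1 + t := by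
    intro ε hε
    obtain ⟨x₂, hx₂, hx₂Z⟩ :=
      hX ε hε (ℝ ∙ x₁) (Submodule.closed_of_finiteDimensional _) (hsep _)
    calc (1 - ε) * (1 + φ t) ≤ ‖x₁ + t • x₂‖ := by
          simpa [abs_of_nonneg ht] using hx₂Z x₁ (Submodule.mem_span_singleton_self x₁) hx₁ t
      _ ≤ ‖x₁‖ + ‖t • x₂‖ := norm_add_le _ _
      _ = 1 + t := by rw [hx₁, norm_smul, hx₂, Real.norm_of_nonneg ht, mul_one]
  linarith [le_of_forall_pos_one_sub_mul_le hline]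

lemma mul_add_le_norm_add_smul {X : Type u} [NormedAddCommGroup X] [NormedSpace ℝ X]
    {φ : ℝ → ℝ} (hφ : IsPositiveModulus φ) {Z : Submodule ℝ X} {x₀ : X} {c : ℝ}
    (hc0 : 0 ≤ c) (hc1 : c ≤ 1) (hx₀ : ‖x₀‖ = 1)
    (hZ : ∀ z ∈ Z, ‖z‖ = 1 → ∀ lam : ℝ, c * (1 + φ |lam|) ≤ ‖z + lam • x₀‖)
    {u : X} (hu : u ∈ Z) (hu1 : ‖u‖ ≤ 1) {lam : ℝ} (hlam : φ |lam| ≤ |lam|) :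
    c * (‖u‖ + φ |lam|) ≤ ‖u + lam • x₀‖ := by
  rcases eq_or_ne u 0 with rfl | hu0
  · calc c * (‖(0 : X)‖ + φ |lam|) ≤ φ |lam| := by
          simpa using mul_le_of_le_one_left (hφ.nonneg (abs_nonneg lam)) hc1
      _ ≤ ‖0 + lam • x₀‖ := by rwa [zero_add, norm_smul, hx₀, mul_one, Real.norm_eq_abs]
  have ha : 0 < ‖u‖ := norm_pos_iff.mpr hu0
  have hscaled := hZ (‖u‖⁻¹ • u) (Z.smul_mem _ hu) (norm_smul_inv_norm hu0) (lam / ‖u‖)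
  rw [abs_div, abs_norm, show ‖u‖⁻¹ • u + (lam / ‖u‖) • x₀ = ‖u‖⁻¹ • (u + lam • x₀) by
    rw [smul_add, smul_smul, div_eq_inv_mul], norm_smul, norm_inv, norm_norm] at hscaled
  calc c * (‖u‖ + φ |lam|) ≤ c * (‖u‖ + ‖u‖ * φ (|lam| / ‖u‖)) := by
        gcongr; exact hφ.le_mul_apply_div ha hu1 (abs_nonneg lam)
    _ = ‖u‖ * (c * (1 + φ (|lam| / ‖u‖))) := by ring
    _ ≤ ‖u‖ * (‖u‖⁻¹ * ‖u + lam • x₀‖) := by gcongr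
    _ = ‖u + lam • x₀‖ := by field_simp

lemma mul_one_add_rpow_le {p a b s c A : ℝ} (hp : 1 ≤ p) (ha : 0 ≤ a) (hb : 0 ≤ b)
    (hs : 0 ≤ s) (hc0 : 0 ≤ c) (hc1 : c ≤ 1) (hab : (a ^ p + b ^ p) ^ (1 / p) = 1)
    (hA : c * (a + s) ≤ A) :
    c * (1 + s ^ p) ^ (1 / p) ≤ (A ^ p + b ^ p) ^ (1 / p) := by
  have hp0 : p ≠ 0 := by positivity
  have hab' : a ^ p + b ^ p = 1 := by
    rwa [one_div, Real.rpow_inv_eq (by positivity) zero_le_one hp0, Real.one_rpow] at hab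
  have key : c ^ p * (1 + s ^ p) ≤ A ^ p + b ^ p :=
    calc c ^ p * (1 + s ^ p) = c ^ p * (a ^ p + s ^ p) + c ^ p * b ^ p := by rw [← hab']; ring
      _ ≤ (c * (a + s)) ^ p + b ^ p := by
          rw [Real.mul_rpow hc0 (by positivity)]
          gcongr
          · exact Real.add_rpow_le_rpow_add ha hs hp
          · exact mul_le_of_le_one_left (by positivity) (Real.rpow_le_one hc0 hc1 (by positivity))
      _ ≤ A ^ p + b ^ p := by gcongr
  calc c * (1 + s ^ p) ^ (1 / p) = (c ^ p * (1 + s ^ p)) ^ (1 / p) := by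
        rw [Real.mul_rpow (by positivity) (by positivity), one_div,
          Real.rpow_rpow_inv hc0 hp0]
    _ ≤ (A ^ p + b ^ p) ^ (1 / p) := by gcongr

lemma WithLp.prod_norm_ofReal_eq {α β : Type u} [Norm α] [Norm β] {p : ℝ} (hp : 0 < p)
    (f : WithLp (ENNReal.ofReal p) (α × β)) :
    ‖f‖ = (‖f.fst‖ ^ p + ‖f.snd‖ ^ p) ^ (1 / p) := by
  rw [WithLp.prod_norm_eq_add (by rwa [ENNReal.toReal_ofReal hp.le]), ENNReal.toReal_ofReal hp.le]

theorem prodLp_phiP_comp_octahedral_general {X Y : Type u} [NormedAddCommGroup X]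
    [NormedSpace ℝ X] [NormedAddCommGroup Y] [NormedSpace ℝ Y]
    (κ : Cardinal.{u})
    (φ : ℝ → ℝ) (hφ : IsPositiveModulus φ)
    (p : ℝ) (hp : 1 ≤ p) [Fact (1 ≤ ENNReal.ofReal p)]
    (hX : PhiOctahedral κ φ X) :
    PhiOctahedral κ (fun t => phiP p (φ t)) (WithLp (ENNReal.ofReal p) (X × Y)) := by
  intro ε hε Z _ hZκ
  obtain ⟨x₀, hx₀, hx₀Z⟩ := hX ε hε _ (Submodule.isClosed_topologicalClosure _)
    ((densChar_topologicalClosure_map_le (WithLp.fstL _ ℝ X Y) Z).trans_lt hZκ)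
  refine ⟨WithLp.toLp _ (x₀, 0), by rw [WithLp.norm_toLp_fst, hx₀], fun z hz hz1 lam => ?_⟩
  have hs := hφ.nonneg (abs_nonneg lam)
  rcases le_or_gt 1 ε with hε1 | hε1
  · refine (mul_nonpos_of_nonpos_of_nonneg (by linarith) ?_).trans (norm_nonneg _)
    simp only [phiP, add_sub_cancel]
    positivity
  -- `Z` is a nonzero subspace, so `κ > ℵ₀`, which forces `φ ≤ id`
  have : Infinite Z := Infinite.of_injective (fun r : ℝ => r • (⟨z, hz⟩ : Z))
    (smul_left_injective ℝ (by simp [← norm_ne_zero_iff, hz1]))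
  have hκ : Cardinal.aleph0 < κ := (aleph0_le_densChar Z).trans_lt hZκ
  have hfst := mul_add_le_norm_add_smul hφ (sub_nonneg.mpr hε1.le) (by linarith) hx₀ hx₀Z
    (u := z.fst) (Submodule.le_topologicalClosure _ (Submodule.mem_map_of_mem hz))
    ((WithLp.norm_fst_le X z).trans hz1.le) (hX.apply_le_self hκ (abs_nonneg lam))
  rw [WithLp.prod_norm_ofReal_eq (by linarith)] at hz1 ⊢
  simpa [phiP] using mul_one_add_rpow_le hp (norm_nonneg _) (norm_nonneg _)
    hs (sub_nonneg.mpr hε1.le) (by linarith) hz1 hfst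

/-- If `X` is a `(<κ)-φ`-octahedral normed space and `p ∈ [1, ∞)`, then
`X ⊕_p Y` is `(<κ)-(φ_p ∘ φ)`-octahedral for every normed space `Y`. -/
theorem prodLp_phiP_comp_octahedral {X Y : Type u} [NormedAddCommGroup X]
    [NormedSpace ℝ X] [NormedAddCommGroup Y] [NormedSpace ℝ Y]
    (κ : Cardinal.{u}) (hκ : Cardinal.aleph0 ≤ κ)
    (φ : ℝ → ℝ) (hφ : IsPositiveModulus φ)
    (p : ℝ) (hp : 1 ≤ p) [Fact (1 ≤ ENNReal.ofReal p)]
    (hX : PhiOctahedral κ φ X) :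
    PhiOctahedral κ (fun t => phiP p (φ t)) (WithLp (ENNReal.ofReal p) (X × Y)) :=
  prodLp_phiP_comp_octahedral_general κ φ hφ p hp hX
end

section
/- Every uniformly convex normed space X of density character κ is (<κ)-φ_X-octahedral, where φ_X is the tangential modulus of convexity of X. -/
open Set Metric ENNReal

universe u

/-!
Pick a dense subset `D` of `Z` with `#D = densChar Z` and a norming functional `f_d` for each
`d ∈ D`. Since `densChar X ≤ max ℵ₀ (densChar X*)`, fewer than `densChar X` functionals cannot
span a dense subspace of `X*`, so Riesz's lemma gives a unit `ψ ∈ X*` far from their closed span.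
The dual of a uniformly convex space is uniformly smooth, and this forces every unit `x` almost
norming `ψ` to satisfy `|f_d x| ≤ η` for all `d`; hence `‖z + s • x‖ ≥ 1 - |s| η` for unit `z ∈ Z`.
Finally let `w = z + t₀ • x` be the point of the line `z + ℝ x` closest to `0`. Uniform convexity
makes `t₀` small and `‖w‖` close to `1`, and `w / ‖w‖` is Birkhoff–James orthogonal to `x`, so
`‖z + λ x‖ = ‖w + (λ - t₀) • x‖` is bounded below through `φ_X`, which is `1`-Lipschitz.
-/

open Cardinal

section DensityCharacter

variable {E : Type u} [TopologicalSpace E]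

theorem exists_dense_mk_eq_densChar (E : Type u) [TopologicalSpace E] :
    ∃ s : Set E, Dense s ∧ #s = densChar E :=
  csInf_mem (s := {c | ∃ s : Set E, Dense s ∧ #s = c}) ⟨_, univ, dense_univ, rfl⟩

theorem densChar_le_mk {s : Set E} (hs : Dense s) : densChar E ≤ #s :=
  csInf_le' ⟨s, hs, rfl⟩

theorem densChar_le_one [Subsingleton E] : densChar E ≤ 1 :=
  (densChar_le_mk dense_univ).trans <|
    mk_le_one_iff_set_subsingleton.mpr subsingleton_of_subsingleton

theorem one_le_densChar [Nonempty E] : 1 ≤ densChar E := by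
  obtain ⟨s, hs, hcard⟩ := exists_dense_mk_eq_densChar E
  rw [← hcard, Cardinal.one_le_iff_ne_zero, mk_ne_zero_iff]
  exact hs.nonempty.to_subtype

theorem nontrivial_of_densChar_lt {F : Type u} [TopologicalSpace F] [Nonempty F]
    (h : densChar F < densChar E) : Nontrivial E := by
  by_contra hE
  rw [not_nontrivial_iff_subsingleton] at hE
  exact h.not_ge (densChar_le_one.trans one_le_densChar)

theorem aleph0_le_densChar_s15 [T1Space E] [Infinite E] : ℵ₀ ≤ densChar E := by
  obtain ⟨s, hs, hcard⟩ := exists_dense_mk_eq_densChar E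
  rw [← hcard, ← not_lt, lt_aleph0_iff_set_finite]
  intro hfin
  exact infinite_univ (hs.closure_eq ▸ hfin.isClosed.closure_eq ▸ hfin)

theorem densChar_le_mk_of_subset_closure {A T : Set E} (hTA : T ⊆ A) (hAT : A ⊆ closure T) :
    densChar A ≤ #T := by
  have hdense : Dense ((↑) ⁻¹' T : Set A) := by
    rwa [Subtype.dense_iff, Subtype.image_preimage_coe, inter_eq_right.mpr hTA]
  exact (densChar_le_mk hdense).trans (mk_preimage_of_injective _ _ Subtype.val_injective)

theorem exists_subset_closure_mk_eq_densChar (A : Set E) :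
    ∃ D ⊆ A, A ⊆ closure D ∧ #D = densChar A := by
  obtain ⟨s, hs, hcard⟩ := exists_dense_mk_eq_densChar A
  exact ⟨(↑) '' s, Subtype.coe_image_subset A s, Subtype.dense_iff.mp hs,
    (mk_image_eq Subtype.val_injective).trans hcard⟩

theorem densChar_le_densChar_of_dense {s : Set E} (hs : Dense s) : densChar E ≤ densChar s := by
  obtain ⟨D, -, hsD, hcard⟩ := exists_subset_closure_mk_eq_densChar s
  exact hcard ▸ densChar_le_mk (dense_closure.mp (hs.mono hsD))

end DensityCharacter

section ClosedSpan

variable {E : Type u} [AddCommGroup E] [Module ℝ E] [TopologicalSpace E] [ContinuousAdd E]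
  [ContinuousSMul ℝ E]

theorem densChar_closure_span_le (s : Set E) :
    densChar (closure (Submodule.span ℝ s : Set E)) ≤ max ℵ₀ #s := by
  let F : List (ℚ × s) → E := fun l => (l.map fun p => (p.1 : ℝ) • (p.2 : E)).sum
  have hF_mem : range F ⊆ Submodule.span ℝ s := by
    rintro _ ⟨l, rfl⟩
    exact list_sum_mem fun x hx => by
      obtain ⟨p, -, rfl⟩ := List.mem_map.mp hx
      exact Submodule.smul_mem _ _ (Submodule.subset_span p.2.2)
  let V : Submodule ℝ E :=
    { carrier := closure (range F)
      add_mem' := fun ha hb => map_mem_closure₂ continuous_add ha hb <| by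
        rintro _ ⟨l₁, rfl⟩ _ ⟨l₂, rfl⟩
        exact ⟨l₁ ++ l₂, by simp [F]⟩
      zero_mem' := subset_closure ⟨[], rfl⟩
      smul_mem' := fun c _ hx => map_mem_closure₂ continuous_smul
        (Rat.denseRange_cast (𝕜 := ℝ) c) hx <| by
          rintro _ ⟨q, rfl⟩ _ ⟨l, rfl⟩
          refine ⟨l.map fun p => (q * p.1, p.2), ?_⟩
          simp [F, List.smul_sum, Function.comp_def, mul_smul] }
  have hspan : (Submodule.span ℝ s : Set E) ⊆ closure (range F) :=
    Submodule.span_le (p := V) |>.mpr fun x hx => subset_closure ⟨[(1, ⟨x, hx⟩)], by simp [F]⟩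
  calc densChar (closure (Submodule.span ℝ s : Set E))
      ≤ #(range F) := densChar_le_mk_of_subset_closure (hF_mem.trans subset_closure)
        (closure_minimal hspan isClosed_closure)
    _ ≤ #(List (ℚ × s)) := mk_range_le
    _ ≤ max ℵ₀ #(ℚ × s) := mk_list_le_max _
    _ ≤ max ℵ₀ #s := by
      refine max_le le_sup_left ?_
      simpa [mk_prod] using mul_le_max_of_aleph0_le_left (b := #s) le_rfl

end ClosedSpan

section Dual

variable {X : Type u} [NormedAddCommGroup X] [NormedSpace ℝ X]

theorem apply_le_opNorm_mul (g : StrongDual ℝ X) (x : X) : g x ≤ ‖g‖ * ‖x‖ :=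
  (le_abs_self _).trans (g.le_opNorm x)

theorem exists_norm_le_one_lt_apply (g : StrongDual ℝ X) {r : ℝ} (hr : r < ‖g‖) :
    ∃ a : X, ‖a‖ ≤ 1 ∧ r < g a := by
  obtain ⟨a, ha, hra⟩ := g.exists_lt_apply_of_lt_opNorm hr
  rcases le_or_gt 0 (g a) with h | h
  · exact ⟨a, ha.le, by rwa [Real.norm_of_nonneg h] at hra⟩
  · exact ⟨-a, by rw [norm_neg]; exact ha.le, by rwa [map_neg, ← Real.norm_of_nonpos h.le]⟩

theorem exists_norm_eq_one_lt_apply (g : StrongDual ℝ X) {r : ℝ} (hr₀ : 0 ≤ r) (hr : r < ‖g‖) :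
    ∃ a : X, ‖a‖ = 1 ∧ r < g a := by
  obtain ⟨a, ha, hra⟩ := exists_norm_le_one_lt_apply g hr
  have ha₀ : 0 < ‖a‖ := norm_pos_iff.mpr fun h => by simp [h] at hra; linarith
  refine ⟨‖a‖⁻¹ • a, by rw [norm_smul, norm_inv, norm_norm, inv_mul_cancel₀ ha₀.ne'], ?_⟩
  rw [map_smul, smul_eq_mul]
  exact hra.trans_le (le_mul_of_one_le_left (by linarith) ((one_le_inv₀ ha₀).mpr ha))

theorem exists_norm_eq_one_forall_apply_eq_zero {V : Submodule ℝ X} (hV : IsClosed (V : Set X))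
    (hVtop : V ≠ ⊤) : ∃ ψ : StrongDual ℝ X, ‖ψ‖ = 1 ∧ ∀ v ∈ V, ψ v = 0 := by
  obtain ⟨x, hx⟩ : ∃ x, x ∉ V := by simpa [Submodule.eq_top_iff'] using hVtop
  obtain ⟨f, u, hfV, hfx⟩ := geometric_hahn_banach_closed_point V.convex hV hx
  have hu : 0 < u := by simpa using hfV 0 V.zero_mem
  -- a linear functional bounded above on a subspace vanishes on it
  have hker : ∀ v ∈ V, f v = 0 := fun v hv => by
    by_contra hfv
    have := hfV _ (V.smul_mem ((u + 1) / f v) hv)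
    rw [map_smul, smul_eq_mul, div_mul_cancel₀ _ hfv] at this
    linarith
  have hf : f ≠ 0 := by rintro rfl; simp at hfx; linarith
  refine ⟨‖f‖⁻¹ • f, ?_, fun v hv => by simp [hker v hv]⟩
  rw [norm_smul, norm_inv, norm_norm, inv_mul_cancel₀ (norm_ne_zero_iff.mpr hf)]

theorem densChar_le_max_aleph0_densChar_dual (X : Type u) [NormedAddCommGroup X]
    [NormedSpace ℝ X] : densChar X ≤ max ℵ₀ (densChar (StrongDual ℝ X)) := by
  obtain ⟨T, hT, hTcard⟩ := exists_dense_mk_eq_densChar (StrongDual ℝ X)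
  choose w hw₁ hw using fun g : StrongDual ℝ X =>
    exists_norm_le_one_lt_apply g (sub_lt_self ‖g‖ (by norm_num : (0 : ℝ) < 1 / 8))
  have hdense : (Submodule.span ℝ (w '' T)).topologicalClosure = ⊤ := by
    by_contra hne
    obtain ⟨ψ, hψ, hψY⟩ :=
      exists_norm_eq_one_forall_apply_eq_zero (Submodule.isClosed_topologicalClosure _) hne
    obtain ⟨g, hgT, hψg⟩ := Metric.mem_closure_iff.mp (hT ψ) (1 / 4) (by norm_num)
    rw [dist_eq_norm] at hψg
    have hψw : ψ (w g) = 0 := hψY _ <| Submodule.le_topologicalClosure _ <|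
      Submodule.subset_span (mem_image_of_mem w hgT)
    have hgw : g (w g) ≤ 1 / 4 := by
      have := apply_le_opNorm_mul (g - ψ) (w g)
      rw [sub_apply, hψw, sub_zero, norm_sub_rev] at this
      nlinarith [hw₁ g, norm_nonneg (ψ - g)]
    linarith [hw g, norm_sub_norm_le ψ g]
  calc densChar X ≤ densChar (closure (Submodule.span ℝ (w '' T) : Set X)) :=
        densChar_le_densChar_of_dense <| by
          rw [← Submodule.topologicalClosure_coe, hdense]; exact dense_univ
    _ ≤ max ℵ₀ #(w '' T) := densChar_closure_span_le _
    _ ≤ max ℵ₀ (densChar (StrongDual ℝ X)) := by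
        gcongr; exact mk_image_le.trans hTcard.le

end Dual

section Moduli

variable {X : Type u} [NormedAddCommGroup X]

theorem one_sub_norm_add_div_two_nonneg {x y : X} (hx : ‖x‖ ≤ 1) (hy : ‖y‖ ≤ 1) :
    0 ≤ 1 - ‖x + y‖ / 2 := by
  linarith [norm_add_le x y]

theorem convexityModulus_nonneg (η : ℝ) : 0 ≤ convexityModulus X η :=
  Real.sInf_nonneg <| by
    rintro _ ⟨x, y, hx, hy, -, rfl⟩
    exact one_sub_norm_add_div_two_nonneg hx hy

theorem convexityModulus_le {η : ℝ} {x y : X} (hx : ‖x‖ ≤ 1) (hy : ‖y‖ ≤ 1)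
    (hxy : η ≤ ‖x - y‖) : convexityModulus X η ≤ 1 - ‖x + y‖ / 2 := by
  refine csInf_le ⟨0, ?_⟩ ⟨x, y, hx, hy, hxy, rfl⟩
  rintro _ ⟨x, y, hx, hy, -, rfl⟩
  exact one_sub_norm_add_div_two_nonneg hx hy

theorem convexityModulus_le_one (η : ℝ) : convexityModulus X η ≤ 1 := by
  rcases eq_empty_or_nonempty
    {d : ℝ | ∃ x y : X, ‖x‖ ≤ 1 ∧ ‖y‖ ≤ 1 ∧ η ≤ ‖x - y‖ ∧ d = 1 - ‖x + y‖ / 2} with h | h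
  · unfold convexityModulus
    rw [h, Real.sInf_empty]
    exact zero_le_one
  · obtain ⟨_, x, y, hx, hy, hxy, rfl⟩ := h
    exact (convexityModulus_le hx hy hxy).trans (by linarith [norm_nonneg (x + y)])

variable [NormedSpace ℝ X]

def BirkhoffJamesOrthogonal (x v : X) : Prop :=
  ∀ lam : ℝ, ‖x‖ ≤ ‖x + lam • v‖

theorem BirkhoffJamesOrthogonal.neg_right {x v : X} (h : BirkhoffJamesOrthogonal x v) :
    BirkhoffJamesOrthogonal x (-v) := fun lam => by
  simpa only [smul_neg, ← neg_smul] using h (-lam)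

theorem BirkhoffJamesOrthogonal.smul_left {x v : X} (h : BirkhoffJamesOrthogonal x v) (c : ℝ) :
    BirkhoffJamesOrthogonal (c • x) v := fun lam => by
  rcases eq_or_ne c 0 with rfl | hc
  · simp
  · rw [show c • x + lam • v = c • (x + (lam / c) • v) by
      rw [smul_add, smul_smul, mul_div_cancel₀ _ hc], norm_smul, norm_smul]
    exact mul_le_mul_of_nonneg_left (h _) (norm_nonneg c)

theorem birkhoffJamesOrthogonal_of_forall_le {z v : X} {t₀ : ℝ}
    (h : ∀ s : ℝ, ‖z + t₀ • v‖ ≤ ‖z + s • v‖) : BirkhoffJamesOrthogonal (z + t₀ • v) v :=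
  fun lam => by simpa only [add_assoc, add_smul] using h (t₀ + lam)

theorem exists_forall_norm_add_smul_le (z : X) {v : X} (hv : v ≠ 0) :
    ∃ t₀ : ℝ, ∀ s : ℝ, ‖z + t₀ • v‖ ≤ ‖z + s • v‖ := by
  refine Continuous.exists_forall_le (by fun_prop) (Filter.tendsto_atTop_mono (fun s => ?_)
    (Filter.tendsto_atTop_add_const_right _ (-‖z‖)
      (tendsto_norm_cocompact_atTop.atTop_mul_const (norm_pos_iff.mpr hv))))
  rw [← norm_smul, ← sub_eq_add_neg]
  simpa [add_comm] using norm_sub_norm_le (s • v) (-z)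

theorem tangentialModulus_nonneg (t : ℝ) : 0 ≤ tangentialModulus X t :=
  Real.sInf_nonneg <| by
    rintro _ ⟨x, v, hx, -, horth, rfl⟩
    linarith [hx ▸ horth t]

variable {x v : X} (hx : ‖x‖ = 1) (hv : ‖v‖ = 1) (hxv : BirkhoffJamesOrthogonal x v)
include hx hv hxv

theorem tangentialModulus_le (t : ℝ) : tangentialModulus X t ≤ ‖x + t • v‖ - 1 :=
  csInf_le ⟨0, fun _ ⟨y, w, hy, _, hyw, hd⟩ => hd ▸ by linarith [hy ▸ hyw t]⟩
    ⟨x, v, hx, hv, hxv, rfl⟩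

theorem tangentialModulus_abs_le (t : ℝ) : tangentialModulus X |t| ≤ ‖x + t • v‖ - 1 := by
  rcases le_or_gt 0 t with ht | ht
  · rw [abs_of_nonneg ht]; exact tangentialModulus_le hx hv hxv t
  · rw [abs_of_neg ht, ← neg_smul_neg]
    exact tangentialModulus_le hx (by rwa [norm_neg]) hxv.neg_right (-t)

theorem tangentialModulus_le_add_abs_sub (a b : ℝ) :
    tangentialModulus X a ≤ tangentialModulus X b + |a - b| := by
  rw [← sub_le_iff_le_add]
  refine le_csInf ⟨_, x, v, hx, hv, hxv, rfl⟩ ?_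
  rintro _ ⟨y, w, hy, hw, hyw, rfl⟩
  have := norm_add_le (y + b • w) ((a - b) • w)
  rw [add_assoc, ← add_smul, add_sub_cancel, norm_smul, hw, mul_one, Real.norm_eq_abs] at this
  linarith [tangentialModulus_le hy hw hyw a]

theorem mul_one_add_tangentialModulus_le {c : ℝ} (hc : 0 < c) (a μ : ℝ) :
    c * (1 + tangentialModulus X a) ≤ ‖c • x + μ • v‖ + |c * a - (|μ|)| := by
  have h₁ := tangentialModulus_le_add_abs_sub hx hv hxv a |μ / c|
  have h₂ := tangentialModulus_abs_le hx hv hxv (μ / c)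
  have h₃ : ‖c • x + μ • v‖ = c * ‖x + (μ / c) • v‖ := by
    rw [← norm_smul_of_nonneg hc.le, smul_add, smul_smul, mul_div_cancel₀ _ hc.ne']
  have h₄ : |c * a - (|μ|)| = c * |a - (|μ / c|)| := by
    rw [abs_div, abs_of_pos hc, ← abs_of_pos hc, ← abs_mul, abs_of_pos hc, mul_sub,
      mul_div_cancel₀ _ hc.ne']
  nlinarith

end Moduli

section AlmostAnnihilated

variable {X : Type u} [NormedAddCommGroup X] [NormedSpace ℝ X]

theorem norm_add_smul_add_norm_sub_smul_le {η : ℝ} (hη : 0 ≤ η) {ψ f : StrongDual ℝ X}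
    (hψ : ‖ψ‖ ≤ 1) (hf : ‖f‖ ≤ 1) :
    ‖ψ + convexityModulus X η • f‖ + ‖ψ - convexityModulus X η • f‖ ≤
      2 + convexityModulus X η * η := by
  set t := convexityModulus X η
  have ht : 0 ≤ t := convexityModulus_nonneg η
  refine le_of_forall_pos_lt_add fun θ hθ => ?_
  obtain ⟨a, ha, hψa⟩ := exists_norm_le_one_lt_apply (ψ + t • f) (sub_lt_self _ (half_pos hθ))
  obtain ⟨b, hb, hψb⟩ := exists_norm_le_one_lt_apply (ψ - t • f) (sub_lt_self _ (half_pos hθ))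
  have hsplit : (ψ + t • f) a + (ψ - t • f) b = ψ (a + b) + t * f (a - b) := by
    simp only [add_apply, sub_apply, smul_apply, map_add, map_sub,
      smul_eq_mul]
    ring
  have hψab : ψ (a + b) ≤ ‖a + b‖ :=
    (apply_le_opNorm_mul ψ _).trans (mul_le_of_le_one_left (norm_nonneg _) hψ)
  have hfab : f (a - b) ≤ ‖a - b‖ :=
    (apply_le_opNorm_mul f _).trans (mul_le_of_le_one_left (norm_nonneg _) hf)
  -- either `a, b` are close, or uniform convexity makes `‖a + b‖` small
  have hbound : ψ (a + b) + t * f (a - b) ≤ 2 + t * η := by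
    rcases le_or_gt ‖a - b‖ η with hab | hab
    · have := mul_le_mul_of_nonneg_left (hfab.trans hab) ht
      linarith [norm_add_le a b]
    · have := mul_le_mul_of_nonneg_left (hfab.trans ((norm_sub_le a b).trans
        (add_le_add ha hb))) ht
      linarith [convexityModulus_le ha hb hab.le, mul_nonneg ht hη]
  linarith

theorem convexityModulus_mul_abs_apply_le {η δ : ℝ} (hη : 0 ≤ η) {ψ f : StrongDual ℝ X}
    (hψ : ‖ψ‖ ≤ 1) (hf : ‖f‖ ≤ 1) (hadd : 1 - δ ≤ ‖ψ + convexityModulus X η • f‖)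
    (hsub : 1 - δ ≤ ‖ψ - convexityModulus X η • f‖) {x : X} (hx : ‖x‖ ≤ 1)
    (hψx : 1 - δ ≤ ψ x) :
    convexityModulus X η * |f x| ≤ convexityModulus X η * η + 2 * δ := by
  have hsmooth := norm_add_smul_add_norm_sub_smul_le hη hψ hf
  have ht := convexityModulus_nonneg (X := X) η
  set t := convexityModulus X η
  have happ_add := (apply_le_opNorm_mul (ψ + t • f) x).trans
    (mul_le_of_le_one_right (norm_nonneg _) hx)
  have happ_sub := (apply_le_opNorm_mul (ψ - t • f) x).trans
    (mul_le_of_le_one_right (norm_nonneg _) hx)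
  simp only [add_apply, sub_apply, smul_apply, smul_eq_mul] at happ_add happ_sub
  have : |t * f x| ≤ t * η + 2 * δ := abs_le.mpr ⟨by linarith, by linarith⟩
  rwa [abs_mul, abs_of_nonneg ht] at this

theorem exists_norm_eq_one_forall_abs_apply_le
    (huc : ∀ ε : ℝ, 0 < ε → ε ≤ 2 → 0 < convexityModulus X ε) {S : Set (StrongDual ℝ X)}
    (hS : ∀ f ∈ S, ‖f‖ ≤ 1) (hcard : max ℵ₀ #S < densChar X) {η : ℝ} (hη : 0 < η) :
    ∃ x : X, ‖x‖ = 1 ∧ ∀ f ∈ S, |f x| ≤ η := by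
  wlog hη₁ : η ≤ 1 generalizing η
  · obtain ⟨x, hx, hSx⟩ := this one_pos le_rfl
    exact ⟨x, hx, fun f hf => (hSx f hf).trans (by linarith)⟩
  set V := (Submodule.span ℝ S).topologicalClosure
  have hV : ∃ ψ, ψ ∉ V := by
    by_contra! hV
    have hdense : Dense (closure (Submodule.span ℝ S : Set (StrongDual ℝ X))) := fun ψ =>
      subset_closure (hV ψ)
    have := (densChar_le_densChar_of_dense hdense).trans (densChar_closure_span_le S)
    exact hcard.not_ge <| (densChar_le_max_aleph0_densChar_dual X).trans <|
      max_le le_sup_left this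
  set t := convexityModulus X (η / 2)
  have ht : 0 < t := huc _ (half_pos hη) (by linarith)
  have ht₁ : t ≤ 1 := convexityModulus_le_one _
  obtain ⟨ψ, -, hψ, hψV⟩ := riesz_lemma_of_lt_one (Submodule.isClosed_topologicalClosure _) hV
    (r := 1 - t * η / 4) (by nlinarith)
  obtain ⟨x, hx, hψx⟩ := exists_norm_eq_one_lt_apply ψ (r := 1 - t * η / 4) (by nlinarith)
    (by rw [hψ]; nlinarith)
  refine ⟨x, hx, fun f hf => ?_⟩
  have hfV : ∀ c : ℝ, c • f ∈ V := fun c =>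
    V.smul_mem c (Submodule.le_topologicalClosure _ (Submodule.subset_span hf))
  have := convexityModulus_mul_abs_apply_le (half_pos hη).le hψ.le (hS f hf)
    (by simpa using hψV _ (V.neg_mem (hfV t))) (hψV _ (hfV t)) hx.le hψx.le
  nlinarith

theorem norm_sub_abs_mul_le_norm_add_smul {f : StrongDual ℝ X} (hf : ‖f‖ ≤ 1) {z x : X}
    (hfz : f z = ‖z‖) {η : ℝ} (hfx : |f x| ≤ η) (s : ℝ) : ‖z‖ - |s| * η ≤ ‖z + s • x‖ := by
  have hsx : -(|s| * η) ≤ s * f x := neg_le_of_abs_le <|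
    (abs_mul s (f x)).trans_le (mul_le_mul_of_nonneg_left hfx (abs_nonneg s))
  calc ‖z‖ - |s| * η ≤ f (z + s • x) := by
        rw [map_add, map_smul, hfz, smul_eq_mul]; linarith
    _ ≤ ‖z + s • x‖ :=
        (apply_le_opNorm_mul f _).trans (mul_le_of_le_one_left (norm_nonneg _) hf)

theorem exists_norm_eq_one_forall_norm_sub_abs_mul_le
    (huc : ∀ ε : ℝ, 0 < ε → ε ≤ 2 → 0 < convexityModulus X ε) {A : Set X}
    (hA : max ℵ₀ (densChar A) < densChar X) {η : ℝ} (hη : 0 < η) :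
    ∃ x : X, ‖x‖ = 1 ∧ ∀ z ∈ A, ∀ s : ℝ, ‖z‖ - |s| * η ≤ ‖z + s • x‖ := by
  obtain ⟨D, -, hAD, hD⟩ := exists_subset_closure_mk_eq_densChar A
  choose f hf hfd using fun d : D => exists_dual_vector'' ℝ (d : X)
  have hcard : max ℵ₀ #(range f) < densChar X :=
    (max_le_max le_rfl (mk_range_le.trans hD.le)).trans_lt hA
  obtain ⟨x, hx, hfx⟩ :=
    exists_norm_eq_one_forall_abs_apply_le huc (forall_mem_range.mpr hf) hcard hη
  refine ⟨x, hx, fun z hz s => ?_⟩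
  have hclosed : IsClosed {y : X | ‖y‖ - |s| * η ≤ ‖y + s • x‖} :=
    isClosed_le (by fun_prop) (by fun_prop)
  exact closure_minimal (fun d hd => norm_sub_abs_mul_le_norm_add_smul (hf ⟨d, hd⟩) (hfd _)
    (hfx _ ⟨_, rfl⟩) s) hclosed (hAD hz)

end AlmostAnnihilated

section TangentialEstimate

variable {X : Type u} [NormedAddCommGroup X] [NormedSpace ℝ X] {z x : X}

theorem abs_le_norm_add_smul_add_one (hz : ‖z‖ = 1) (hx : ‖x‖ = 1) (s : ℝ) :
    |s| ≤ ‖z + s • x‖ + 1 := by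
  have := norm_sub_norm_le (s • x) (-z)
  rw [norm_smul, hx, norm_neg, hz, Real.norm_eq_abs, sub_neg_eq_add, add_comm] at this
  linarith

theorem abs_lt_of_norm_add_smul_le_one (hz : ‖z‖ = 1) (hx : ‖x‖ = 1) {η τ : ℝ} (hη : 0 ≤ η)
    (hητ : η < convexityModulus X τ) (halmost : ∀ s : ℝ, 1 - |s| * η ≤ ‖z + s • x‖) {t : ℝ}
    (ht : ‖z + t • x‖ ≤ 1) : |t| < τ := by
  by_contra! hτt
  have hmid := convexityModulus_le hz.le ht (by simpa [norm_smul, hx] using hτt)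
  rw [show z + (z + t • x) = (2 : ℝ) • (z + (t / 2) • x) by module, norm_smul,
    Real.norm_two] at hmid
  have := halmost (t / 2)
  rw [abs_div, abs_two] at this
  nlinarith [abs_le_norm_add_smul_add_one hz hx t]

theorem norm_mul_one_add_tangentialModulus_le (hz : ‖z‖ = 1) (hx : ‖x‖ = 1) {t₀ : ℝ}
    (ht₀ : ∀ s : ℝ, ‖z + t₀ • x‖ ≤ ‖z + s • x‖) (hw₀ : 0 < ‖z + t₀ • x‖) (lam : ℝ) :
    ‖z + t₀ • x‖ * (1 + tangentialModulus X |lam|) ≤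
      ‖z + lam • x‖ + (1 - ‖z + t₀ • x‖) * |lam| + |t₀| := by
  set w := z + t₀ • x
  have hw₁ : ‖w‖ ≤ 1 := by simpa [hz] using ht₀ 0
  have hunit : ‖‖w‖⁻¹ • w‖ = 1 := by
    rw [norm_smul, norm_inv, norm_norm, inv_mul_cancel₀ hw₀.ne']
  have horth := (birkhoffJamesOrthogonal_of_forall_le ht₀).smul_left ‖w‖⁻¹
  have hmain := mul_one_add_tangentialModulus_le hunit hx horth hw₀ |lam| (lam - t₀)
  rw [smul_smul, mul_inv_cancel₀ hw₀.ne', one_smul,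
    show w + (lam - t₀) • x = z + lam • x by simp only [w]; module] at hmain
  have h₁ := abs_sub_abs_le_abs_sub lam (lam - t₀)
  have h₂ := abs_sub_abs_le_abs_sub (lam - t₀) lam
  rw [show lam - (lam - t₀) = t₀ by ring] at h₁
  rw [show lam - t₀ - lam = -t₀ by ring, abs_neg] at h₂
  have h₃ := mul_le_of_le_one_left (abs_nonneg lam) hw₁
  have herr : |‖w‖ * |lam| - (|lam - t₀|)| ≤ (1 - ‖w‖) * |lam| + |t₀| :=
    abs_le.mpr ⟨by linarith, by linarith⟩
  linarith

theorem exists_pos_forall_one_sub_mul_le_norm_add_smul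
    (huc : ∀ ε : ℝ, 0 < ε → ε ≤ 2 → 0 < convexityModulus X ε) {ε : ℝ} (hε : 0 < ε) :
    ∃ η > 0, ∀ z x : X, ‖z‖ = 1 → ‖x‖ = 1 → (∀ s : ℝ, 1 - |s| * η ≤ ‖z + s • x‖) →
      ∀ lam : ℝ, (1 - ε) * (1 + tangentialModulus X |lam|) ≤ ‖z + lam • x‖ := by
  wlog hε₁ : ε ≤ 1 generalizing ε
  · obtain ⟨η, hη, h⟩ := this one_pos le_rfl
    refine ⟨η, hη, fun z x hz hx halmost lam => le_trans ?_ (h z x hz hx halmost lam)⟩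
    nlinarith [tangentialModulus_nonneg (X := X) |lam|]
  have hτ := huc (ε / 2) (half_pos hε) (by linarith)
  -- the estimate below is `(1 + η) ‖z + lam • x‖ ≥ (1 - 2η - ε / 2) (1 + φ |lam|)`
  set η := min (ε / 6) (convexityModulus X (ε / 2) / 2)
  have hη₀ : 0 < η := lt_min (by positivity) (half_pos hτ)
  have hηε : η ≤ ε / 6 := min_le_left _ _
  have hητ : η < convexityModulus X (ε / 2) := (min_le_right _ _).trans_lt (half_lt_self hτ)
  refine ⟨η, hη₀, fun z x hz hx halmost lam => ?_⟩
  obtain ⟨t₀, ht₀⟩ := exists_forall_norm_add_smul_le z (norm_ne_zero_iff.mp (hx ▸ one_ne_zero))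
  have ht₀τ := abs_lt_of_norm_add_smul_le_one hz hx hη₀.le hητ halmost (by simpa [hz] using ht₀ 0)
  have hw : 1 - η ≤ ‖z + t₀ • x‖ := by nlinarith [halmost t₀]
  have hmain := norm_mul_one_add_tangentialModulus_le hz hx ht₀ (by linarith) lam
  have hφ := tangentialModulus_nonneg (X := X) |lam|
  have hlam := abs_le_norm_add_smul_add_one hz hx lam
  refine le_of_mul_le_mul_left ?_ (by linarith : 0 < 1 + η)
  nlinarith [mul_le_mul (by linarith : 1 - ‖z + t₀ • x‖ ≤ η) hlam (abs_nonneg lam) hη₀.le,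
    mul_le_mul_of_nonneg_right hw (by linarith : 0 ≤ 1 + tangentialModulus X |lam|),
    mul_nonneg (by linarith : 0 ≤ ε / 6 - η) hφ, mul_nonneg (mul_nonneg hε.le hη₀.le) hφ]

end TangentialEstimate

/-- Every uniformly convex normed space `X` of density character `κ`
is `(<κ)-φ_X`-octahedral, where `φ_X` is the tangential modulus of convexity of `X`. -/
theorem phiOctahedral_of_uniformlyConvex {X : Type u} [NormedAddCommGroup X]
    [NormedSpace ℝ X] (huc : ∀ ε : ℝ, 0 < ε → ε ≤ 2 → 0 < convexityModulus X ε)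
    (κ : Cardinal.{u}) (hdens : densChar X = κ) :
    PhiOctahedral κ (tangentialModulus X) X := by
  subst hdens
  intro ε hε Z _ hZ
  rcases subsingleton_or_nontrivial Z with hZ₀ | hZ₀
  · have := nontrivial_of_densChar_lt hZ
    obtain ⟨x, hx⟩ := exists_norm_eq X zero_le_one
    refine ⟨x, hx, fun z hz hz₁ => ?_⟩
    have : z = 0 := congrArg Subtype.val (Subsingleton.elim (⟨z, hz⟩ : Z) 0)
    simp [this] at hz₁
  have : Infinite Z := PreconnectedSpace.infinite
  obtain ⟨η, hη, hstable⟩ := exists_pos_forall_one_sub_mul_le_norm_add_smul huc hε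
  obtain ⟨x, hx, halmost⟩ := exists_norm_eq_one_forall_norm_sub_abs_mul_le huc (A := Z)
    (max_lt (aleph0_le_densChar_s15.trans_lt hZ) hZ) hη
  exact ⟨x, hx, fun z hz hz₁ => hstable z x hz₁ hx (by simpa [hz₁] using halmost z hz)⟩
end

section
/- For every measure space (M, Σ, μ), the space L_∞(μ) admits a lattice tiling by closed unit balls: there exists an additive subgroup D of L_∞(μ) (namely, the classes of functions with values in the even integers 2ℤ) that is 2-separated and 1-dense, so the closed balls of radius 1 centered at points of D have mutually disjoint interiors and cover L_∞(μ). In particular, γ*(L_∞(μ)) = 1. -/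
open Set Metric ENNReal

universe u

/-!
The lattice is the set `D` of classes of functions taking a.e. values in `2ℤ`. A nonzero element
of `D` is nonzero on a set of positive measure, where its values are nonzero even integers, so its
essential supremum is at least `2`. Conversely, rounding a representative of `f` pointwise to a
nearest even integer is a measurable operation that moves each value by at most `1`, giving a
point of `D` within distance `1` of `f`.
-/

open MeasureTheory

theorem AddSubgroup.isRSeparated_iff {X : Type u} [NormedAddCommGroup X] {r : ℝ}
    {D : AddSubgroup X} :
    IsRSeparated r (D : Set X) ↔ ∀ x ∈ D, x ≠ 0 → r ≤ ‖x‖ := by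
  refine ⟨fun h x hx hx0 ↦ by simpa using h x hx 0 D.zero_mem hx0, fun h x hx y hy hxy ↦ ?_⟩
  exact h (x - y) (D.sub_mem hx hy) (sub_ne_zero.mpr hxy)

theorem Real.isRSeparated_zmultiples (a : ℝ) :
    IsRSeparated |a| (AddSubgroup.zmultiples a : Set ℝ) := by
  rw [AddSubgroup.isRSeparated_iff]
  intro x hx hx0
  obtain ⟨k, rfl⟩ := AddSubgroup.mem_zmultiples_iff.mp hx
  have hk0 : k ≠ 0 := by
    rintro rfl
    exact hx0 (zero_zsmul a)
  rw [Real.norm_eq_abs, zsmul_eq_mul, abs_mul]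
  exact le_mul_of_one_le_left (abs_nonneg a) (by exact_mod_cast Int.one_le_abs hk0)

theorem Real.abs_sub_round_div_mul_le {a : ℝ} (ha : a ≠ 0) (y : ℝ) :
    |y - round (y / a) * a| ≤ |a| / 2 :=
  calc |y - round (y / a) * a| = |(y / a - round (y / a)) * a| := by
        rw [sub_mul, div_mul_cancel₀ y ha]
    _ = |y / a - round (y / a)| * |a| := abs_mul _ _
    _ ≤ 1 / 2 * |a| := mul_le_mul_of_nonneg_right (abs_sub_round _) (abs_nonneg a)
    _ = |a| / 2 := by ring

theorem Real.measurable_round : Measurable (round : ℝ → ℤ) := by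
  simp only [funext round_eq]
  exact (measurable_id.add_const _).floor

namespace MeasureTheory.Lp

variable {α : Type u} [MeasurableSpace α] {μ : Measure α}

section

-- `E : Type` puts `Lp E ∞ μ` in `Type u`, the universe in which `IsRSeparated` is stated.
variable {E : Type} [NormedAddCommGroup E]

theorem ae_norm_le_norm_top (f : Lp E ∞ μ) : ∀ᵐ x ∂μ, ‖f x‖ ≤ ‖f‖ := by
  simpa only [Lp.norm_def, toReal_eLpNorm (Lp.aestronglyMeasurable f)] using
    ae_le_lpNorm_exponent_top (Lp.memLp f)

theorem norm_le_of_ae_bound_top {f : Lp E ∞ μ} {C : ℝ} (hC : 0 ≤ C)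
    (hfC : ∀ᵐ x ∂μ, ‖f x‖ ≤ C) : ‖f‖ ≤ C := by
  rw [Lp.norm_def, eLpNorm_exponent_top]
  exact ENNReal.toReal_le_of_le_ofReal hC (eLpNormEssSup_le_of_ae_bound hfC)

def aeValuedIn (p : ℝ≥0∞) (μ : Measure α) (G : AddSubgroup E) :
    AddSubgroup (Lp E p μ) where
  carrier := {f | ∀ᵐ x ∂μ, f x ∈ G}
  zero_mem' := by
    filter_upwards [coeFn_zero E p μ] with x hx
    rw [hx]
    exact G.zero_mem
  add_mem' {f g} hf hg := by
    filter_upwards [hf, hg, coeFn_add f g] with x hfx hgx hx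
    rw [hx]
    exact G.add_mem hfx hgx
  neg_mem' {f} hf := by
    filter_upwards [hf, coeFn_neg f] with x hfx hx
    rw [hx]
    exact G.neg_mem hfx

theorem mem_aeValuedIn {p : ℝ≥0∞} {G : AddSubgroup E} {f : Lp E p μ} :
    f ∈ aeValuedIn p μ G ↔ ∀ᵐ x ∂μ, f x ∈ G :=
  Iff.rfl

theorem isRSeparated_aeValuedIn {r : ℝ} {G : AddSubgroup E}
    (hG : IsRSeparated r (G : Set E)) :
    IsRSeparated r (aeValuedIn ∞ μ G : Set (Lp E ∞ μ)) := by
  rw [AddSubgroup.isRSeparated_iff] at hG ⊢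
  intro f hf hf0
  by_contra! hfr
  refine hf0 (eq_zero_iff_ae_eq_zero.mpr ?_)
  filter_upwards [mem_aeValuedIn.mp hf, ae_norm_le_norm_top f] with x hfx hfx_le
  by_contra hx0
  exact (hfx_le.trans_lt hfr).not_ge (hG _ hfx hx0)

variable [MeasurableSpace E] [BorelSpace E] [_root_.SecondCountableTopology E]

theorem isRDense_aeValuedIn {r : ℝ} {G : AddSubgroup E} {φ : E → E} (hφ : Measurable φ)
    (hφG : ∀ y, φ y ∈ G) (hφr : ∀ y, ‖y - φ y‖ ≤ r) :
    IsRDense r (aeValuedIn ∞ μ G : Set (Lp E ∞ μ)) := by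
  intro f
  have hr : 0 ≤ r := (norm_nonneg _).trans (hφr 0)
  have hψ : MemLp (fun x ↦ f x - φ (f x)) ∞ μ :=
    memLp_top_of_bound ((measurable_id.sub hφ).comp_aemeasurable
      (Lp.aestronglyMeasurable f).aemeasurable).aestronglyMeasurable r (ae_of_all _ (hφr <| f ·))
  refine ⟨f - hψ.toLp _, ?_, ?_⟩
  · filter_upwards [coeFn_sub f (hψ.toLp _), hψ.coeFn_toLp] with x hx hψx
    rw [hx, Pi.sub_apply, hψx, _root_.sub_sub_cancel]
    exact hφG _
  · rw [_root_.sub_sub_cancel]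
    refine norm_le_of_ae_bound_top hr ?_
    filter_upwards [hψ.coeFn_toLp] with x hx
    rw [hx]
    exact hφr _

end

theorem isRDense_aeValuedIn_zmultiples {a : ℝ} (ha : a ≠ 0) :
    IsRDense (|a| / 2) (aeValuedIn ∞ μ (AddSubgroup.zmultiples a) : Set (Lp ℝ ∞ μ)) :=
  isRDense_aeValuedIn ((measurable_from_top.comp (Real.measurable_round.comp
    (measurable_id.div_const a))).mul_const a) (fun y ↦ ⟨round (y / a), zsmul_eq_mul _ _⟩)
    (Real.abs_sub_round_div_mul_le ha)

end MeasureTheory.Lp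

/-- For every measure space `(M, Σ, μ)`, the space `L_∞(μ)` admits a
lattice tiling by closed unit balls: there is an additive subgroup `D` of `L_∞(μ)` that
is `2`-separated and `1`-dense. -/
theorem Linfty_lattice_tiling {M : Type u} [MeasurableSpace M]
    (μ : MeasureTheory.Measure M) :
    ∃ D : AddSubgroup (MeasureTheory.Lp ℝ ⊤ μ),
      IsRSeparated 2 (D : Set (MeasureTheory.Lp ℝ ⊤ μ)) ∧
        IsRDense 1 (D : Set (MeasureTheory.Lp ℝ ⊤ μ)) := by
  refine ⟨Lp.aeValuedIn ⊤ μ (AddSubgroup.zmultiples 2), ?_, ?_⟩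
  · simpa only [abs_two] using
      Lp.isRSeparated_aeValuedIn (μ := μ) (Real.isRSeparated_zmultiples 2)
  · simpa only [abs_two, div_self (two_ne_zero' ℝ)] using
      Lp.isRDense_aeValuedIn_zmultiples (μ := μ) two_ne_zero
end
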